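/- arXiv:2412.02948 — 2 statements merged into one kernel-verified Lean document; each statement's English description precedes it below -/
import Mathlib

section
/- Let σ, σ̄ ∈ R^{d×d} and let Q ∈ O^d be an orthogonal matrix. Then σ̄ Q = σ̄ Q σ† σ if and only if Q(Ker σ) ⊆ Ker σ̄, where σ† is the Moore–Penrose pseudoinverse of σ. -/
open Matrix

/-!
If `σ P σ = σ`, then `σ (1 - P σ) = 0`: the columns of `1 - P σ` lie in `Ker σ`. Hence a matrix
`A` killing `Ker σ` satisfies `A (1 - P σ) = 0`, i.e. `A = A P σ`; conversely `A = A P σ` clearly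
kills `Ker σ`. Take `A = σ̄ Q`.
-/

namespace Matrix

variable {k m n R : Type*} [Fintype k] [Fintype n] [DecidableEq n] [CommRing R]

theorem mul_one_sub_mul_eq_zero {σ : Matrix k n R} {P : Matrix n k R} (hσ : σ * P * σ = σ) :
    σ * (1 - P * σ) = 0 := by
  rw [Matrix.mul_sub, Matrix.mul_one, ← Matrix.mul_assoc, hσ, sub_self]

theorem eq_mul_mul_iff_ker_le {A : Matrix m n R} {σ : Matrix k n R} {P : Matrix n k R}
    (hσ : σ * P * σ = σ) :
    A = A * P * σ ↔ ∀ v, σ *ᵥ v = 0 → A *ᵥ v = 0 := by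
  constructor
  · intro h v hv
    rw [h, ← mulVec_mulVec, hv, mulVec_zero]
  · intro h
    have hA : A * (1 - P * σ) = 0 := ext_iff_mulVec.mpr fun v => by
      rw [← mulVec_mulVec, zero_mulVec]
      exact h _ (by rw [mulVec_mulVec, mul_one_sub_mul_eq_zero hσ, zero_mulVec])
    rwa [Matrix.mul_sub, Matrix.mul_one, ← Matrix.mul_assoc, sub_eq_zero] at hA

end Matrix

theorem stmt2_general {d : ℕ} (σ σb Q P : Matrix (Fin d) (Fin d) ℝ)
    (h1 : σ * P * σ = σ) :
    σb * Q = σb * Q * P * σ ↔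
      ∀ v : Fin d → ℝ, σ.mulVec v = 0 → σb.mulVec (Q.mulVec v) = 0 := by
  simp only [mulVec_mulVec]
  exact eq_mul_mul_iff_ker_le h1

/-- for `σ, σ̄ ∈ ℝ^{d×d}`, `Q` orthogonal, and `P` the Moore–Penrose
pseudoinverse of `σ` (characterized by the four Penrose equations),
`σ̄ Q = σ̄ Q P σ` iff `Q (Ker σ) ⊆ Ker σ̄`. -/
theorem stmt2 {d : ℕ} (σ σb Q P : Matrix (Fin d) (Fin d) ℝ)
    (hQ : Q ∈ Matrix.orthogonalGroup (Fin d) ℝ)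
    (h1 : σ * P * σ = σ) (h2 : P * σ * P = P)
    (h3 : (σ * P)ᵀ = σ * P) (h4 : (P * σ)ᵀ = P * σ) :
    σb * Q = σb * Q * P * σ ↔
      ∀ v : Fin d → ℝ, σ.mulVec v = 0 → σb.mulVec (Q.mulVec v) = 0 :=
  stmt2_general σ σb Q P h1
end

section
/- Let η, ν be probability measures on W^d and let T : W^d → W^d be a measurable map with T_#η = ν which is a.s. bijective, i.e. there exists measurable T̂ : W^d → W^d with T̂ ∘ T = Id η-a.s. and T ∘ T̂ = Id ν-a.s. If the coupling π_T = (Id, T)_#η is bicausal, then the coupling π_{T̂} = (Id, T̂)_#ν equals R_#π_T and is also bicausal; hence T̂ is a bicausal Monge map from ν to η. -/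
open MeasureTheory

noncomputable section

abbrev I01 : Type := Set.Icc (0:ℝ) 1

abbrev W (d : ℕ) : Type := C(I01, EuclideanSpace ℝ (Fin d))

instance (d : ℕ) : MeasurableSpace (W d) := borel _
instance (d : ℕ) : BorelSpace (W d) := ⟨rfl⟩

/-- The stopped path `ω (· ∧ t)`. -/
def stopAt (d : ℕ) (t : I01) : W d → W d := fun ω =>
  ⟨fun s => ω ⟨min (s : ℝ) (t : ℝ), ⟨le_min s.2.1 t.2.1, min_le_of_left_le s.2.2⟩⟩,
    ω.continuous.comp (Continuous.subtype_mk (continuous_subtype_val.min continuous_const) _)⟩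

/-- The canonical filtration `F_t = σ(ω ↦ ω(· ∧ t))` on `W d`. -/
def Ft (d : ℕ) (t : I01) : MeasurableSpace (W d) :=
  MeasurableSpace.comap (stopAt d t) inferInstance

/-- The right-continuous version of the canonical filtration,
`H_t = ⋂_{ε>0} F_{(t+ε) ∧ 1}`. -/
def Ht (d : ℕ) (t : I01) : MeasurableSpace (W d) :=
  ⨅ (ε : ℝ) (_ : 0 < ε), Ft d (Set.projIcc 0 1 zero_le_one ((t : ℝ) + ε))

/-- The `η`-completion of a sub-σ-algebra `m` on `W d`: the σ-algebra generated by `m`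
together with the `η`-null sets. -/
def cmpl (d : ℕ) (η : Measure (W d)) (m : MeasurableSpace (W d)) : MeasurableSpace (W d) :=
  m ⊔ MeasurableSpace.generateFrom {s : Set (W d) | η s = 0}

/-- `π` is a causal coupling with first marginal `η`: some kernel `θ` disintegrates `π`
with respect to `η` and satisfies the causality condition: for all `t` and `B ∈ H_t`,
`ω ↦ θ ω B` is measurable for the `η`-completion of `H_t`. -/
def IsCausal (d : ℕ) (η : Measure (W d)) (π : Measure (W d × W d)) : Prop :=
  ∃ θ : W d → Measure (W d),
    (∀ A B : Set (W d), MeasurableSet A → MeasurableSet B →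
      π (A ×ˢ B) = ∫⁻ ω in A, θ ω B ∂η) ∧
    ∀ t : I01, ∀ B : Set (W d), MeasurableSet[Ht d t] B →
      Measurable[cmpl d η (Ht d t)] (fun ω => θ ω B)

/-- `π` is a bicausal coupling between `η` and `ν`. -/
def IsBicausal (d : ℕ) (η ν : Measure (W d)) (π : Measure (W d × W d)) : Prop :=
  IsCausal d η π ∧ IsCausal d ν (π.map Prod.swap)

/-- `π` is a coupling of `(η, ν)`. -/
def IsCoupling (d : ℕ) (η ν : Measure (W d)) (π : Measure (W d × W d)) : Prop :=
  π.map Prod.fst = η ∧ π.map Prod.snd = ν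

theorem MeasureTheory.Measure.map_map_swap {α β : Type*} [MeasurableSpace α] [MeasurableSpace β]
    (π : Measure (α × β)) : (π.map Prod.swap).map Prod.swap = π := by
  rw [Measure.map_map measurable_swap measurable_swap, Prod.swap_swap_eq, Measure.map_id]

theorem MeasureTheory.Measure.map_graph_of_ae_leftInverse {α β : Type*} [MeasurableSpace α]
    [MeasurableSpace β] (μ : Measure α) {T : α → β} {S : β → α} (hT : Measurable T)
    (hS : Measurable S) (hST : ∀ᵐ x ∂μ, S (T x) = x) :
    (μ.map T).map (fun y => (y, S y)) = (μ.map (fun x => (x, T x))).map Prod.swap := by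
  rw [Measure.map_map (by fun_prop) hT, Measure.map_map measurable_swap (by fun_prop)]
  exact Measure.map_congr (hST.mono fun x hx => by simp [hx])

theorem IsBicausal.swap {d : ℕ} {η ν : Measure (W d)} {π : Measure (W d × W d)}
    (h : IsBicausal d η ν π) : IsBicausal d ν η (π.map Prod.swap) :=
  ⟨h.2, by simpa only [Measure.map_map_swap] using h.1⟩

theorem stmt13_general {d : ℕ} (η ν : Measure (W d))
    (T That : W d → W d) (hT : Measurable T) (hThat : Measurable That)
    (hpush : η.map T = ν)
    (hinv1 : ∀ᵐ ω ∂η, That (T ω) = ω)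
    (hbc : IsBicausal d η ν (η.map (fun ω => (ω, T ω)))) :
    ν.map (fun ω => (ω, That ω)) = (η.map (fun ω => (ω, T ω))).map Prod.swap ∧
    IsBicausal d ν η (ν.map (fun ω => (ω, That ω))) := by
  have hgraph : ν.map (fun ω => (ω, That ω)) = (η.map (fun ω => (ω, T ω))).map Prod.swap :=
    hpush ▸ η.map_graph_of_ae_leftInverse hT hThat hinv1
  exact ⟨hgraph, hgraph ▸ hbc.swap⟩

/-- if `T` pushes `η` to `ν`, is a.s. bijective with a.s. inverse `T̂`, and the
Monge coupling `π_T = (Id, T)_# η` is bicausal, then `π_{T̂} = (Id, T̂)_# ν` equals the swap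
of `π_T` and is bicausal; hence `T̂` is a bicausal Monge map from `ν` to `η`. -/
theorem stmt13 {d : ℕ} (η ν : Measure (W d)) [IsProbabilityMeasure η] [IsProbabilityMeasure ν]
    (T That : W d → W d) (hT : Measurable T) (hThat : Measurable That)
    (hpush : η.map T = ν)
    (hinv1 : ∀ᵐ ω ∂η, That (T ω) = ω) (hinv2 : ∀ᵐ ω ∂ν, T (That ω) = ω)
    (hbc : IsBicausal d η ν (η.map (fun ω => (ω, T ω)))) :
    ν.map (fun ω => (ω, That ω)) = (η.map (fun ω => (ω, T ω))).map Prod.swap ∧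
    IsBicausal d ν η (ν.map (fun ω => (ω, That ω))) :=
  stmt13_general η ν T That hT hThat hpush hinv1 hbc
end
end
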